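/- arXiv:2312.11425 — 3 statements merged into one kernel-verified Lean document; each statement's English description precedes it below -/
import Mathlib

section
/- Every extreme point of the unconstrained LASSO solution set is a solution with minimal support: if x is an extreme point of Sol(y,A), and x' ∈ Sol(y,A) satisfies supp(x') ⊆ supp(x), then x' = x. -/
open Matrix BigOperators

noncomputable def lassoObj {m N : ℕ} (lam : ℝ) (y : Fin m → ℝ)
    (A : Matrix (Fin m) (Fin N) ℝ) (x : Fin N → ℝ) : ℝ :=
  (∑ i, (A.mulVec x i - y i) ^ 2) + lam * ∑ j, |x j|

def lassoSol {m N : ℕ} (lam : ℝ) (y : Fin m → ℝ)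
    (A : Matrix (Fin m) (Fin N) ℝ) : Set (Fin N → ℝ) :=
  {x | ∀ z, lassoObj lam y A x ≤ lassoObj lam y A z}

/-!
Two minimisers `x`, `x₂` have the same fit `A x = A x₂` (the squared loss is strictly convex in `A x`),
so `d = x₂ - x` lies in the kernel of `A`. If `supp x₂ ⊆ supp x`, then `supp d ⊆ supp x`, so for small
`|t|` the point `x + t d` keeps the signs of `x` and the objective is affine in `t` along this segment.
An affine function with a minimum at `t = 0` is constant, so `x ± t d` are minimisers, and
extremality of `x` forces `d = 0`.
-/

open Filter Topology Function

theorem eq_zero_of_eventually_add_smul_mem {E : Type*} [AddCommGroup E] [Module ℝ E]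
    {s : Set E} {x d : E} (hext : ∀ p, x + p ∈ s → x - p ∈ s → p = 0)
    (hline : ∀ᶠ t in 𝓝 (0 : ℝ), x + t • d ∈ s) : d = 0 := by
  have hneg : ∀ᶠ t in 𝓝 (0 : ℝ), x + (-t) • d ∈ s :=
    (continuous_neg.tendsto' 0 0 neg_zero).eventually hline
  obtain ⟨t, ⟨hplus, hminus⟩, ht⟩ :=
    (((hline.and hneg).filter_mono nhdsWithin_le_nhds).and
      (self_mem_nhdsWithin : Set.Ioi (0 : ℝ) ∈ 𝓝[>] 0)).exists
  rw [neg_smul, ← sub_eq_add_neg] at hminus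
  exact (smul_eq_zero.mp (hext _ hplus hminus)).resolve_left (ne_of_gt ht)

theorem eq_zero_of_isLocalMin_of_eventuallyEq_affine {f : ℝ → ℝ} {c : ℝ}
    (hmin : IsLocalMin f 0) (hf : f =ᶠ[𝓝 0] fun t => f 0 + t * c) : c = 0 := by
  have hderiv : HasDerivAt f c 0 := by
    simpa using (((hasDerivAt_id (0 : ℝ)).mul_const c).const_add (f 0)).congr_of_eventuallyEq hf
  exact hmin.hasDerivAt_eq_zero hderiv

theorem eventually_abs_add_mul_eq {a b : ℝ} (hb : b ≠ 0 → a ≠ 0) :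
    ∀ᶠ t in 𝓝 (0 : ℝ), |a + t * b| = |a| + t * (SignType.sign a * b) := by
  have hcont : Tendsto (fun t : ℝ => a + t * b) (𝓝 0) (𝓝 a) := by
    simpa using ((tendsto_id (x := 𝓝 (0 : ℝ))).mul_const b).const_add a
  rcases lt_trichotomy a 0 with ha | ha | ha
  · filter_upwards [hcont.eventually (gt_mem_nhds ha)] with t ht
    rw [abs_of_neg ht, abs_of_neg ha, sign_neg ha]
    push_cast [SignType.coe_one]
    ring
  · have hb0 : b = 0 := not_imp_not.mp hb ha
    exact Eventually.of_forall fun t => by simp [ha, hb0]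
  · filter_upwards [hcont.eventually (lt_mem_nhds ha)] with t ht
    rw [abs_of_pos ht, abs_of_pos ha, sign_pos ha]
    push_cast [SignType.coe_one]
    ring

theorem eventually_sum_abs_add_smul_eq {ι : Type*} [Fintype ι] {x d : ι → ℝ}
    (hsupp : support d ⊆ support x) :
    ∀ᶠ t in 𝓝 (0 : ℝ), ∑ j, |(x + t • d) j| =
      ∑ j, |x j| + t * ∑ j, SignType.sign (x j) * d j := by
  have hcoord : ∀ᶠ t in 𝓝 (0 : ℝ), ∀ j, |x j + t * d j| = |x j| + t * (SignType.sign (x j) * d j) :=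
    eventually_all.mpr fun j => eventually_abs_add_mul_eq fun hd => hsupp hd
  filter_upwards [hcoord] with t ht
  simp only [Pi.add_apply, Pi.smul_apply, smul_eq_mul, ht, Finset.sum_add_distrib, Finset.mul_sum]

section

variable {m N : ℕ} {lam : ℝ} {y : Fin m → ℝ} {A : Matrix (Fin m) (Fin N) ℝ}

theorem lassoObj_midpoint_add_le (hlam : 0 ≤ lam) (x x' : Fin N → ℝ) :
    lassoObj lam y A ((2⁻¹ : ℝ) • (x + x')) + ∑ i, (((A *ᵥ x) i - (A *ᵥ x') i) / 2) ^ 2 ≤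
      (lassoObj lam y A x + lassoObj lam y A x') / 2 := by
  have hquad : ∑ i, ((A *ᵥ ((2⁻¹ : ℝ) • (x + x'))) i - y i) ^ 2
      + ∑ i, (((A *ᵥ x) i - (A *ᵥ x') i) / 2) ^ 2
      = (∑ i, ((A *ᵥ x) i - y i) ^ 2 + ∑ i, ((A *ᵥ x') i - y i) ^ 2) / 2 := by
    rw [← Finset.sum_add_distrib, ← Finset.sum_add_distrib, Finset.sum_div]
    refine Finset.sum_congr rfl fun i _ => ?_
    simp only [mulVec_smul, mulVec_add, Pi.smul_apply, Pi.add_apply, smul_eq_mul]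
    ring
  have hl1 : ∑ j, |((2⁻¹ : ℝ) • (x + x')) j| ≤ (∑ j, |x j| + ∑ j, |x' j|) / 2 := by
    rw [← Finset.sum_add_distrib, Finset.sum_div]
    refine Finset.sum_le_sum fun j _ => ?_
    simp only [Pi.smul_apply, Pi.add_apply, smul_eq_mul, abs_mul, abs_inv, abs_two]
    linarith [abs_add_le (x j) (x' j)]
  unfold lassoObj
  linarith [mul_le_mul_of_nonneg_left hl1 hlam]

theorem mulVec_eq_of_mem_lassoSol (hlam : 0 ≤ lam) {x x' : Fin N → ℝ}
    (hx : x ∈ lassoSol lam y A) (hx' : x' ∈ lassoSol lam y A) : A *ᵥ x = A *ᵥ x' := by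
  have hsum : ∑ i, (((A *ᵥ x) i - (A *ᵥ x') i) / 2) ^ 2 = 0 := by
    refine le_antisymm ?_ (Finset.sum_nonneg fun i _ => sq_nonneg _)
    linarith [lassoObj_midpoint_add_le (y := y) (A := A) hlam x x', hx ((2⁻¹ : ℝ) • (x + x')), hx' x]
  funext i
  have hi := (Finset.sum_eq_zero_iff_of_nonneg fun i _ => sq_nonneg _).mp hsum i (Finset.mem_univ i)
  linarith [pow_eq_zero_iff two_ne_zero |>.mp hi]

theorem lassoObj_add_smul_of_mulVec_eq_zero {x d : Fin N → ℝ} (hd : A *ᵥ d = 0) (t : ℝ) :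
    lassoObj lam y A (x + t • d) = (∑ i, ((A *ᵥ x) i - y i) ^ 2) + lam * ∑ j, |(x + t • d) j| := by
  rw [lassoObj, mulVec_add, mulVec_smul, hd, smul_zero, add_zero]

theorem eventually_add_smul_mem_lassoSol {x d : Fin N → ℝ} (hx : x ∈ lassoSol lam y A)
    (hd : A *ᵥ d = 0) (hsupp : support d ⊆ support x) :
    ∀ᶠ t in 𝓝 (0 : ℝ), x + t • d ∈ lassoSol lam y A := by
  set f : ℝ → ℝ := fun t => lassoObj lam y A (x + t • d)
  set c := lam * ∑ j, SignType.sign (x j) * d j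
  have hf0 : f 0 = lassoObj lam y A x := by simp [f]
  have haff : f =ᶠ[𝓝 0] fun t => f 0 + t * c := by
    filter_upwards [eventually_sum_abs_add_smul_eq hsupp] with t ht
    simp only [f, c, lassoObj_add_smul_of_mulVec_eq_zero hd, ht, zero_smul, add_zero]
    ring
  have hc : c = 0 :=
    eq_zero_of_isLocalMin_of_eventuallyEq_affine
      (Eventually.of_forall fun t => hf0 ▸ hx _) haff
  filter_upwards [haff] with t ht z
  change f t ≤ _
  rw [ht, hc, mul_zero, add_zero, hf0]
  exact hx z

end

/-- Every extreme point of the LASSO solution set is a solution with minimal support. -/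
theorem lasso_extreme_point_minimal_support {m N : ℕ} (lam : ℝ) (hlam : 0 < lam)
    (y : Fin m → ℝ) (A : Matrix (Fin m) (Fin N) ℝ)
    (x : Fin N → ℝ) (hx : x ∈ lassoSol lam y A)
    (hext : ∀ p : Fin N → ℝ, x + p ∈ lassoSol lam y A → x - p ∈ lassoSol lam y A → p = 0)
    (x2 : Fin N → ℝ) (hx2 : x2 ∈ lassoSol lam y A)
    (hsupp : Function.support x2 ⊆ Function.support x) :
    x2 = x := by
  have hker : A *ᵥ (x2 - x) = 0 := by
    rw [mulVec_sub, mulVec_eq_of_mem_lassoSol hlam.le hx2 hx, sub_self]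
  have hsupp' : support (x2 - x) ⊆ support x :=
    (support_sub _ _).trans (Set.union_subset hsupp subset_rfl)
  exact sub_eq_zero.mp <|
    eq_zero_of_eventually_add_smul_mem hext (eventually_add_smul_mem_lassoSol hx hker hsupp')
end

section
/- If x ∈ Sol(y,A) has support S ≠ ∅ and A_Sᵀ A_S is not invertible, then the LASSO problem has multiple minimisers: there exists x̃ ∈ Sol(y,A) with x̃ ≠ x. Consequently stsp(y,A) = 0. -/
open Matrix BigOperators

/-- The stability support: the distance to support change. -/
noncomputable def stsp {m N : ℕ} (lam : ℝ) (y : Fin m → ℝ)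
    (A : Matrix (Fin m) (Fin N) ℝ) : ℝ :=
  sInf {δ : ℝ | 0 ≤ δ ∧
    ∃ (yt : Fin m → ℝ) (At : Matrix (Fin m) (Fin N) ℝ)
      (x xt : Fin N → ℝ), x ∈ lassoSol lam y A ∧ xt ∈ lassoSol lam yt At ∧
      (∀ i, |yt i - y i| ≤ δ) ∧ (∀ i j, |A i j - At i j| ≤ δ) ∧
      Function.support x ≠ Function.support xt}

/-- The column submatrix of `A` with columns indexed by the finset `S`. -/
def colSub {m N : ℕ} (A : Matrix (Fin m) (Fin N) ℝ) (S : Finset (Fin N)) :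
    Matrix (Fin m) {j // j ∈ S} ℝ :=
  A.submatrix id (fun j : {j // j ∈ S} => (j : Fin N))

/-!
Since `A_Sᵀ A_S w = 0` forces `‖A_S w‖² = 0`, a singular Gram matrix yields `v ≠ 0` with `A v = 0`
and `supp v ⊆ S = supp x`. Scale it so that `|v j| ≤ |x j|` for all `j`, with equality at some
`j₀`. Then `|x j + v j| + |x j - v j| = 2 |x j|` and `A (x ± v) = A x`, so the objectives at
`x + v` and `x - v` average to the minimum and both are minimisers. One of them vanishes at
`j₀ ∈ supp x`: it differs from `x` and has a different support, so already the unperturbed data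
`(y, A)` witness a support change and `stsp` vanishes.
-/

theorem abs_add_add_abs_sub_of_abs_le {K : Type*} [Field K] [LinearOrder K]
    [IsStrictOrderedRing K] {a b : K} (h : |b| ≤ |a|) : |a + b| + |a - b| = 2 * |a| := by
  rcases le_total 0 a with ha | ha
  · rw [abs_of_nonneg ha] at h ⊢
    obtain ⟨h₁, h₂⟩ := abs_le.mp h
    rw [abs_of_nonneg (by linarith), abs_of_nonneg (by linarith)]
    ring
  · rw [abs_of_nonpos ha] at h ⊢
    obtain ⟨h₁, h₂⟩ := abs_le.mp h
    rw [abs_of_nonpos (by linarith), abs_of_nonpos (by linarith)]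
    ring

theorem exists_abs_mul_le_abs_of_ne_zero {ι K : Type*} [Fintype ι] [Field K] [LinearOrder K]
    [IsStrictOrderedRing K] {x v : ι → K} (hv : v ≠ 0) (hvx : ∀ j, v j ≠ 0 → x j ≠ 0) :
    ∃ t : K, ∃ j₀, (∀ j, |t * v j| ≤ |x j|) ∧ x j₀ ≠ 0 ∧ |t * v j₀| = |x j₀| := by
  classical
  obtain ⟨j₀, hj₀, hmin⟩ := Finset.exists_min_image {j | v j ≠ 0} (fun j => |x j| / |v j|)
    (Finset.filter_nonempty_iff.mpr (by simpa [funext_iff] using hv))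
  simp only [Finset.mem_filter_univ] at hj₀ hmin
  refine ⟨|x j₀| / |v j₀|, j₀, fun j => ?_, hvx j₀ hj₀, ?_⟩
  · rcases eq_or_ne (v j) 0 with hj | hj
    · simp [hj]
    · rw [abs_mul, abs_div, abs_abs, abs_abs, ← le_div_iff₀ (abs_pos.mpr hj)]
      exact hmin j hj
  · rw [abs_mul, abs_div, abs_abs, abs_abs, div_mul_cancel₀ _ (abs_ne_zero.mpr hj₀)]

theorem mulVec_extend_val_eq_submatrix_mulVec {m ι R : Type*} [Fintype ι] [CommSemiring R]
    (A : Matrix m ι R) (S : Finset ι) (w : S → R) :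
    A *ᵥ Function.extend Subtype.val w 0 = A.submatrix id Subtype.val *ᵥ w := by
  ext i
  have hout : ∀ j ∉ S, A i j * Function.extend Subtype.val w 0 j = 0 := fun j hj => by
    rw [Function.extend_apply' _ _ _ (by simpa), Pi.zero_apply, mul_zero]
  simp only [mulVec, dotProduct, submatrix_apply, id]
  rw [← Finset.sum_subset S.subset_univ fun j _ => hout j, ← Finset.sum_coe_sort S]
  simp only [Subtype.val_injective.extend_apply]

theorem exists_ne_zero_mulVec_eq_zero_of_not_isUnit_gram {m N : ℕ} {A : Matrix (Fin m) (Fin N) ℝ}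
    {S : Finset (Fin N)} (h : ¬IsUnit ((colSub A S)ᵀ * colSub A S)) :
    ∃ v ≠ 0, (∀ j, v j ≠ 0 → j ∈ S) ∧ A *ᵥ v = 0 := by
  classical
  obtain ⟨w, hw, hAw⟩ := exists_mulVec_eq_zero_iff.mpr
    (by simpa [isUnit_iff_isUnit_det] using h : ((colSub A S)ᵀ * colSub A S).det = 0)
  rw [← conjTranspose_eq_transpose_of_trivial, conjTranspose_mul_self_mulVec_eq_zero] at hAw
  obtain ⟨j, hj⟩ := Function.ne_iff.mp hw
  refine ⟨Function.extend Subtype.val w 0, fun h0 => hj ?_, fun k hk => ?_, ?_⟩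
  · simpa [Subtype.val_injective.extend_apply] using congrFun h0 j
  · by_contra hkS
    exact hk (Function.extend_apply' _ _ _ (by simpa))
  · rw [mulVec_extend_val_eq_submatrix_mulVec]
    exact hAw

section Lasso

variable {m N : ℕ} {lam : ℝ} {y : Fin m → ℝ} {A : Matrix (Fin m) (Fin N) ℝ} {x v : Fin N → ℝ}

theorem lassoObj_add_add_lassoObj_sub (hAv : A *ᵥ v = 0) (hvx : ∀ j, |v j| ≤ |x j|) :
    lassoObj lam y A (x + v) + lassoObj lam y A (x - v) = 2 * lassoObj lam y A x := by
  have hl1 : ∑ j, |(x + v) j| + ∑ j, |(x - v) j| = 2 * ∑ j, |x j| := by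
    simp only [Finset.mul_sum, ← Finset.sum_add_distrib, Pi.add_apply, Pi.sub_apply,
      abs_add_add_abs_sub_of_abs_le (hvx _)]
  simp only [lassoObj, mulVec_add, mulVec_sub, hAv, add_zero, sub_zero]
  linear_combination lam * hl1

theorem add_mem_lassoSol_of_mulVec_eq_zero (hx : x ∈ lassoSol lam y A) (hAv : A *ᵥ v = 0)
    (hvx : ∀ j, |v j| ≤ |x j|) : x + v ∈ lassoSol lam y A ∧ x - v ∈ lassoSol lam y A := by
  have hsum := lassoObj_add_add_lassoObj_sub (lam := lam) (y := y) hAv hvx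
  exact ⟨fun z => by linarith [hx z, hx (x - v)], fun z => by linarith [hx z, hx (x + v)]⟩

theorem exists_mem_lassoSol_apply_eq_zero (hx : x ∈ lassoSol lam y A) (hAv : A *ᵥ v = 0)
    (hv : v ≠ 0) (hvx : ∀ j, v j ≠ 0 → x j ≠ 0) :
    ∃ xt ∈ lassoSol lam y A, ∃ j, x j ≠ 0 ∧ xt j = 0 := by
  obtain ⟨t, j, hle, hxj, heq⟩ := exists_abs_mul_le_abs_of_ne_zero hv hvx
  obtain ⟨hadd, hsub⟩ := add_mem_lassoSol_of_mulVec_eq_zero hx (v := t • v)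
    (by rw [mulVec_smul, hAv, smul_zero]) hle
  rcases abs_eq_abs.mp heq with h | h
  · exact ⟨x - t • v, hsub, j, hxj, by simp [h]⟩
  · exact ⟨x + t • v, hadd, j, hxj, by simp [h]⟩

theorem stsp_eq_zero_of_support_ne {xt : Fin N → ℝ} (hx : x ∈ lassoSol lam y A)
    (hxt : xt ∈ lassoSol lam y A) (h : Function.support x ≠ Function.support xt) :
    stsp lam y A = 0 := by
  have hmem : (0 : ℝ) ∈ {δ : ℝ | 0 ≤ δ ∧
      ∃ (yt : Fin m → ℝ) (At : Matrix (Fin m) (Fin N) ℝ)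
        (x xt : Fin N → ℝ), x ∈ lassoSol lam y A ∧ xt ∈ lassoSol lam yt At ∧
        (∀ i, |yt i - y i| ≤ δ) ∧ (∀ i j, |A i j - At i j| ≤ δ) ∧
        Function.support x ≠ Function.support xt} :=
    ⟨le_rfl, y, A, x, xt, hx, hxt, by simp, by simp, h⟩
  exact le_antisymm (csInf_le ⟨0, fun _ hδ => hδ.1⟩ hmem) (le_csInf ⟨0, hmem⟩ fun _ hδ => hδ.1)

end Lasso

theorem lasso_multiple_of_singular_gram_general {m N : ℕ} (lam : ℝ)
    (y : Fin m → ℝ) (A : Matrix (Fin m) (Fin N) ℝ)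
    (x : Fin N → ℝ) (hx : x ∈ lassoSol lam y A)
    (S : Finset (Fin N)) (hS : ∀ j, j ∈ S ↔ x j ≠ 0)
    (hGram : ¬ IsUnit ((colSub A S)ᵀ * colSub A S)) :
    (∃ xt ∈ lassoSol lam y A, xt ≠ x) ∧ stsp lam y A = 0 := by
  obtain ⟨v, hv, hvS, hAv⟩ := exists_ne_zero_mulVec_eq_zero_of_not_isUnit_gram hGram
  obtain ⟨xt, hxt, j, hxj, hxtj⟩ :=
    exists_mem_lassoSol_apply_eq_zero hx hAv hv fun k hk => (hS k).mp (hvS k hk)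
  refine ⟨⟨xt, hxt, fun h => hxj (h ▸ hxtj)⟩, stsp_eq_zero_of_support_ne hx hxt fun h =>
    (h ▸ Function.mem_support.mpr hxj : j ∈ Function.support xt) hxtj⟩

/-- If the Gram matrix on a nonempty support of a minimiser is not invertible,
then there are multiple minimisers and the stability support vanishes. -/
theorem lasso_multiple_of_singular_gram {m N : ℕ} (lam : ℝ) (hlam : 0 < lam)
    (y : Fin m → ℝ) (A : Matrix (Fin m) (Fin N) ℝ)
    (x : Fin N → ℝ) (hx : x ∈ lassoSol lam y A)
    (S : Finset (Fin N)) (hS : ∀ j, j ∈ S ↔ x j ≠ 0) (hSne : S.Nonempty)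
    (hGram : ¬ IsUnit ((colSub A S)ᵀ * colSub A S)) :
    (∃ xt ∈ lassoSol lam y A, xt ≠ x) ∧ stsp lam y A = 0 :=
  lasso_multiple_of_singular_gram_general lam y A x hx S hS hGram
end

section
/- σ₁ upper bound on stability support: suppose x is the unique minimiser of the LASSO problem with input (y,A), with support S, Sᶜ ≠ ∅, and there is i ∉ S with |Aᵢᵀ(Ax − y)| > λ/2 − t for some 0 < t < λ/4. Then stsp(y,A) ≤ 4‖A‖_max · t / λ. -/
open Matrix BigOperators

/-- The entrywise max "norm" of a matrix. -/
noncomputable def matMax {m N : ℕ} (A : Matrix (Fin m) (Fin N) ℝ) : ℝ :=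
  ⨆ i, ⨆ j, |A i j|

/-!
Rescaling column `i` of `A` by `c = lam / (lam - 2t) ≥ 1` is a perturbation of size
`(c - 1) ‖A‖_max ≤ 4 ‖A‖_max t / lam`. If a minimiser of the rescaled problem kept the support
of `x`, it would ignore the rescaled column and, since enlarging a column only makes the ℓ¹
penalty cheaper, it would also minimise the original problem, hence equal `x`. But the rescaling
multiplies the `i`-th correlation `Aᵢᵀ (A x - y)` by `c`, pushing it above `lam / 2`, which
violates the optimality condition of `x` in the inactive coordinate `i`.
-/

open Filter Topology

lemma abs_le_half_of_forall_quadratic_nonneg {g C lam : ℝ}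
    (h : ∀ ε, 0 ≤ 2 * ε * g + ε ^ 2 * C + lam * |ε|) : |g| ≤ lam / 2 := by
  have hsmall : ∀ s > 0, 2 * |g| ≤ s * C + lam := by
    intro s hs
    rcases le_or_gt 0 g with hg | hg
    · have := h (-s)
      rw [abs_neg, abs_of_pos hs] at this
      rw [abs_of_nonneg hg]
      nlinarith
    · have := h s
      rw [abs_of_pos hs] at this
      rw [abs_of_neg hg]
      nlinarith
  have hlim : Tendsto (fun s => s * C + lam) (𝓝[>] 0) (𝓝 (0 * C + lam)) :=
    ((continuous_id.mul continuous_const).add continuous_const).continuousAt.tendsto.mono_left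
      nhdsWithin_le_nhds
  have := ge_of_tendsto hlim (eventually_nhdsWithin_of_forall hsmall)
  linarith

section DiagonalScaling

variable {R : Type*} [CommSemiring R] {m n : Type*} [Fintype n] [DecidableEq n]
  (A : Matrix m n R)

lemma mul_diagonal_mulVec (d : n → R) (v : n → R) : (A * diagonal d) *ᵥ v = A *ᵥ (d * v) := by
  rw [← mulVec_mulVec]
  congr 1
  funext j
  exact mulVec_diagonal d v j

lemma transpose_mul_diagonal_mulVec [Fintype m] (d : n → R) (v : m → R) :
    (A * diagonal d)ᵀ *ᵥ v = d * (Aᵀ *ᵥ v) := by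
  rw [transpose_mul, diagonal_transpose, ← mulVec_mulVec]
  funext j
  exact mulVec_diagonal d _ j

end DiagonalScaling

section Lasso

variable {m N : ℕ} {lam : ℝ} {y : Fin m → ℝ} {A : Matrix (Fin m) (Fin N) ℝ}

lemma continuous_lassoObj (lam : ℝ) (y : Fin m → ℝ) (A : Matrix (Fin m) (Fin N) ℝ) :
    Continuous (lassoObj lam y A) := by
  unfold lassoObj
  fun_prop

lemma norm_le_lassoObj_div (hlam : 0 < lam) (x : Fin N → ℝ) :
    ‖x‖ ≤ lassoObj lam y A x / lam := by
  have hl1 : lam * ∑ j, |x j| ≤ lassoObj lam y A x :=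
    le_add_of_nonneg_left (Finset.sum_nonneg fun _ _ => sq_nonneg _)
  have hsum : ‖x‖ ≤ ∑ j, |x j| :=
    (pi_norm_le_iff_of_nonneg (Finset.sum_nonneg fun _ _ => abs_nonneg _)).2 fun j =>
      Finset.single_le_sum (fun k _ => abs_nonneg (x k)) (Finset.mem_univ j)
  rw [le_div_iff₀ hlam]
  nlinarith

lemma lassoSol_nonempty (hlam : 0 < lam) (y : Fin m → ℝ) (A : Matrix (Fin m) (Fin N) ℝ) :
    (lassoSol lam y A).Nonempty := by
  have hcoercive : Tendsto (lassoObj lam y A) (cocompact _) atTop := by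
    have := (tendsto_norm_cocompact_atTop (E := Fin N → ℝ)).atTop_mul_const hlam
    exact tendsto_atTop_mono (fun x => (le_div_iff₀ hlam).1 (norm_le_lassoObj_div hlam x)) this
  exact (continuous_lassoObj lam y A).exists_forall_le hcoercive

lemma lassoObj_le_of_mulVec_eq {A' : Matrix (Fin m) (Fin N) ℝ} {z z' : Fin N → ℝ}
    (hlam : 0 ≤ lam) (hmv : A' *ᵥ z' = A *ᵥ z) (hl1 : ∑ j, |z' j| ≤ ∑ j, |z j|) :
    lassoObj lam y A' z' ≤ lassoObj lam y A z := by
  unfold lassoObj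
  rw [hmv]
  gcongr

lemma lassoObj_add_single {x : Fin N → ℝ} {i : Fin N} (hxi : x i = 0) (ε : ℝ) :
    lassoObj lam y A (x + Pi.single i ε) = lassoObj lam y A x
      + 2 * ε * (Aᵀ *ᵥ (A *ᵥ x - y)) i + ε ^ 2 * ∑ k, A k i ^ 2 + lam * |ε| := by
  have hmv : ∀ k, (A *ᵥ (x + Pi.single i ε)) k = (A *ᵥ x) k + ε * A k i := by
    simp [mulVec_add, mulVec_single]
  have hl1 : ∑ j, |(x + Pi.single i ε : Fin N → ℝ) j| = ∑ j, |x j| + |ε| := by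
    have : ∀ j, |(x + Pi.single i ε : Fin N → ℝ) j| = |x j| + |(Pi.single i ε : Fin N → ℝ) j| := by
      intro j
      rcases eq_or_ne j i with rfl | hj
      · simp [hxi]
      · simp [hj]
    rw [Finset.sum_congr rfl fun j _ => this j, Finset.sum_add_distrib]
    simp [Pi.single_apply, apply_ite]
  have hres : (Aᵀ *ᵥ (A *ᵥ x - y)) i = ∑ k, A k i * ((A *ᵥ x) k - y k) := by
    simp [mulVec, dotProduct]
  have hsq : ∀ k, ((A *ᵥ x) k + ε * A k i - y k) ^ 2
      = ((A *ᵥ x) k - y k) ^ 2 + 2 * ε * (A k i * ((A *ᵥ x) k - y k)) + ε ^ 2 * A k i ^ 2 := by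
    intro k; ring
  simp only [lassoObj, hmv, hl1, hsq, hres, Finset.sum_add_distrib, ← Finset.mul_sum]
  ring

lemma abs_transpose_mulVec_residual_le {x : Fin N → ℝ} (hx : x ∈ lassoSol lam y A)
    {i : Fin N} (hxi : x i = 0) : |(Aᵀ *ᵥ (A *ᵥ x - y)) i| ≤ lam / 2 :=
  abs_le_half_of_forall_quadratic_nonneg (C := ∑ k, A k i ^ 2) fun ε => by
    have := hx (x + Pi.single i ε)
    rw [lassoObj_add_single hxi] at this
    linarith

lemma mem_lassoSol_of_mem_lassoSol_mul_diagonal (hlam : 0 ≤ lam) {d xt : Fin N → ℝ}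
    (hd : ∀ j, 1 ≤ |d j|) (hxt : xt ∈ lassoSol lam y (A * diagonal d)) (hdx : d * xt = xt) :
    xt ∈ lassoSol lam y A := by
  have hd0 : ∀ j, d j ≠ 0 := fun j h => absurd (hd j) (by simp [h])
  intro w
  calc lassoObj lam y A xt ≤ lassoObj lam y (A * diagonal d) xt :=
        lassoObj_le_of_mulVec_eq hlam (by rw [mul_diagonal_mulVec, hdx]) le_rfl
    _ ≤ lassoObj lam y (A * diagonal d) (w / d) := hxt _
    _ ≤ lassoObj lam y A w := by
        refine lassoObj_le_of_mulVec_eq hlam ?_ (Finset.sum_le_sum fun j _ => ?_)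
        · rw [mul_diagonal_mulVec]
          congr 1
          funext j
          exact mul_div_cancel₀ (w j) (hd0 j)
        · rw [Pi.div_apply, abs_div]
          exact div_le_self (abs_nonneg _) (hd j)

lemma stsp_le {δ : ℝ} (hδ : 0 ≤ δ) {yt : Fin m → ℝ} {At : Matrix (Fin m) (Fin N) ℝ}
    {x xt : Fin N → ℝ} (hx : x ∈ lassoSol lam y A) (hxt : xt ∈ lassoSol lam yt At)
    (hy : ∀ k, |yt k - y k| ≤ δ) (hA : ∀ k j, |A k j - At k j| ≤ δ)
    (hsupp : Function.support x ≠ Function.support xt) : stsp lam y A ≤ δ :=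
  csInf_le ⟨0, fun _ h => h.1⟩ ⟨hδ, yt, At, x, xt, hx, hxt, hy, hA, hsupp⟩

end Lasso

section MatMax

variable {m N : ℕ} (A : Matrix (Fin m) (Fin N) ℝ)

lemma matMax_nonneg : 0 ≤ matMax A :=
  Real.iSup_nonneg fun _ => Real.iSup_nonneg fun _ => abs_nonneg _

lemma abs_le_matMax (k : Fin m) (j : Fin N) : |A k j| ≤ matMax A :=
  calc |A k j| ≤ ⨆ j', |A k j'| :=
        le_ciSup (f := fun j' => |A k j'|) (Set.finite_range _).bddAbove j
    _ ≤ matMax A := le_ciSup (f := fun k' => ⨆ j', |A k' j'|) (Set.finite_range _).bddAbove k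

lemma abs_sub_mul_diagonal_apply_le (d : Fin N → ℝ) (k : Fin m) (j : Fin N) :
    |A k j - (A * diagonal d) k j| ≤ |1 - d j| * matMax A := by
  rw [mul_diagonal, show A k j - A k j * d j = (1 - d j) * A k j by ring, abs_mul]
  exact mul_le_mul_of_nonneg_left (abs_le_matMax A k j) (abs_nonneg _)

end MatMax

section ColumnScaling

variable {m N : ℕ} {i : Fin N} {c : ℝ}

lemma one_le_abs_update_one (hc : 1 ≤ c) (j : Fin N) :
    1 ≤ |Function.update (1 : Fin N → ℝ) i c j| := by
  rcases eq_or_ne j i with rfl | hj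
  · rwa [Function.update_self, abs_of_nonneg (zero_le_one.trans hc)]
  · simp [hj]

lemma abs_one_sub_update_one_le (hc : 1 ≤ c) (j : Fin N) :
    |1 - Function.update (1 : Fin N → ℝ) i c j| ≤ c - 1 := by
  rcases eq_or_ne j i with rfl | hj
  · rw [Function.update_self, abs_sub_comm, abs_of_nonneg (sub_nonneg.2 hc)]
  · simp [hj, hc]

lemma update_one_mul_of_apply_eq_zero {z : Fin N → ℝ} (hz : z i = 0) :
    Function.update (1 : Fin N → ℝ) i c * z = z := by
  funext j
  rcases eq_or_ne j i with rfl | hj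
  · simp [hz]
  · simp [hj]

lemma support_ne_of_mem_lassoSol_mul_diagonal_update {lam : ℝ} (hlam : 0 ≤ lam)
    {y : Fin m → ℝ} {A : Matrix (Fin m) (Fin N) ℝ} {x xt : Fin N → ℝ}
    (hx : lassoSol lam y A = {x}) (hxi : x i = 0) (hc : 1 ≤ c)
    (hbig : lam / 2 < c * |(Aᵀ *ᵥ (A *ᵥ x - y)) i|)
    (hxt : xt ∈ lassoSol lam y (A * diagonal (Function.update 1 i c))) :
    Function.support x ≠ Function.support xt := by
  intro hsupp
  have hxti : xt i = 0 := Function.notMem_support.1 (hsupp ▸ Function.notMem_support.2 hxi)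
  have hxt_eq : xt = x := by
    simpa [hx] using mem_lassoSol_of_mem_lassoSol_mul_diagonal hlam
      (one_le_abs_update_one hc) hxt (update_one_mul_of_apply_eq_zero hxti)
  have hkkt := abs_transpose_mulVec_residual_le (hxt_eq ▸ hxt) hxi
  rw [transpose_mul_diagonal_mulVec, mul_diagonal_mulVec, update_one_mul_of_apply_eq_zero hxi,
    Pi.mul_apply, abs_mul, Function.update_self, abs_of_nonneg (zero_le_one.trans hc)] at hkkt
  linarith

end ColumnScaling

/-- σ₁ upper bound on the stability support. -/
theorem lasso_sigma1_upper_bound {m N : ℕ} (lam : ℝ) (hlam : 0 < lam)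
    (y : Fin m → ℝ) (A : Matrix (Fin m) (Fin N) ℝ)
    (x : Fin N → ℝ) (hx : lassoSol lam y A = {x})
    (i : Fin N) (hxi : x i = 0) (t : ℝ) (ht0 : 0 < t) (ht1 : t < lam / 4)
    (hbig : lam / 2 - t < |Aᵀ.mulVec (A.mulVec x - y) i|) :
    stsp lam y A ≤ 4 * matMax A * t / lam := by
  have hgap : 0 < lam - 2 * t := by linarith
  -- `c` is chosen so that `c * (lam / 2 - t) = lam / 2`
  set c := lam / (lam - 2 * t) with hc
  have hc1 : 1 ≤ c := by rw [hc, le_div_iff₀ hgap]; linarith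
  have hcδ : c - 1 ≤ 4 * t / lam := by
    rw [hc, div_sub_one hgap.ne', div_le_div_iff₀ hgap hlam]; nlinarith
  have hc_big : lam / 2 < c * |(Aᵀ *ᵥ (A *ᵥ x - y)) i| := by
    have : c * (lam / 2 - t) = lam / 2 := by rw [hc]; field_simp
    linarith [mul_lt_mul_of_pos_left hbig (zero_lt_one.trans_le hc1)]
  set d := Function.update (1 : Fin N → ℝ) i c
  obtain ⟨xt, hxt⟩ := lassoSol_nonempty hlam y (A * diagonal d)
  have hM := matMax_nonneg A
  refine stsp_le (by positivity) (hx ▸ rfl) hxt (fun k => by rw [sub_self, abs_zero]; positivity) (fun k j => ?_)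
    (support_ne_of_mem_lassoSol_mul_diagonal_update hlam.le hx hxi hc1 hc_big hxt)
  calc |A k j - (A * diagonal d) k j|
      _ ≤ |1 - d j| * matMax A := abs_sub_mul_diagonal_apply_le A _ k j
      _ ≤ 4 * t / lam * matMax A := by gcongr; exact (abs_one_sub_update_one_le hc1 j).trans hcδ
      _ = 4 * matMax A * t / lam := by ring
end
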